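/- arXiv:1305.0255 — 2 statements merged into one kernel-verified Lean document; each statement's English description precedes it below -/
import Mathlib

section
/- For any ε > 0, any integer N ≥ 1, and any reals μ₁, μ₂ ≥ 0 satisfying N/β − μ₁ ≥ 0, there exists a constant C = C(β,ε,N,μ₁,μ₂) such that for all z ≥ 0: Σ_{k=N}^∞ k^{μ₂} I_{k/β − μ₁}(z) ≤ C · z^{N/β − μ₁} · e^{3z/2} · e^{εz}. -/
/-!
Write `x = z / 2`, `v = N / β - μ₁` and fix `θ = 1 / (2 + 2ε)`. In the `j`-th term of the series
for `I_{v + a}(z)`, the power `x ^ (a + j)` is traded against `Γ(a + j + 1) ≤ 2 Γ(v + a + j + 1)`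
through `y ^ t ≤ Γ(t + 1) e^{y + 1}` at `y = x / θ`, at the price of a factor
`θ ^ (a + j) e^{x / θ}`, while `x ^ j ≤ j! e^x`. Summing the geometric factor `θ ^ j` gives
`I_{v + a}(z) ≲ θ ^ a x ^ v e^{x / θ + x}`, and `x / θ + x = (3 / 2 + ε) z`. For the order
`a = k / β` the factor `θ ^ a` is geometric in `k`, so it absorbs the polynomial weight
`(N + k) ^ μ₂`.
-/

open Real

/-- Modified Bessel function of order `v`:
`I_v(z) = ∑_{j=0}^∞ (z/2)^{v+2j} / (j! Γ(v+j+1))`. -/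
noncomputable def besselI (v z : ℝ) : ℝ :=
  ∑' j : ℕ, (z / 2) ^ (v + 2 * (j : ℝ)) / ((j.factorial : ℝ) * Real.Gamma (v + (j : ℝ) + 1))

open Set MeasureTheory Filter Topology

namespace Real

lemma Gamma_le_one_of_mem_Icc {a : ℝ} (ha : a ∈ Icc 1 2) : Gamma a ≤ 1 := by
  have h := convexOn_Gamma.le_max_of_mem_Icc (by norm_num : (1 : ℝ) ∈ Ioi 0)
    (by norm_num : (2 : ℝ) ∈ Ioi 0) ha
  rwa [Gamma_one, Gamma_two, max_self] at h

lemma one_le_Gamma {b : ℝ} (hb : 2 ≤ b) : 1 ≤ Gamma b :=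
  Gamma_two ▸ Gamma_strictMonoOn_Ici.monotoneOn (le_refl (2 : ℝ)) hb hb

lemma half_le_Gamma {b : ℝ} (hb : 1 ≤ b) : 1 / 2 ≤ Gamma b := by
  rcases le_total 2 b with h | h
  · linarith [one_le_Gamma h]
  · have hrec : Gamma (b + 1) = b * Gamma b := Gamma_add_one (by linarith)
    nlinarith [one_le_Gamma (by linarith : 2 ≤ b + 1), Gamma_pos_of_pos (by linarith : 0 < b)]

lemma Gamma_le_two_mul_Gamma_add {a v : ℝ} (ha : 1 ≤ a) (hv : 0 ≤ v) :
    Gamma a ≤ 2 * Gamma (a + v) := by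
  rcases le_total 2 a with h | h
  · have hmono : Gamma a ≤ Gamma (a + v) :=
      Gamma_strictMonoOn_Ici.monotoneOn h (show 2 ≤ a + v by linarith) (by linarith)
    linarith [Gamma_pos_of_pos (by linarith : 0 < a)]
  · linarith [Gamma_le_one_of_mem_Icc ⟨ha, h⟩, half_le_Gamma (by linarith : 1 ≤ a + v)]

lemma rpow_le_Gamma_mul_exp {y t : ℝ} (hy : 0 ≤ y) (ht : 0 ≤ t) :
    y ^ t ≤ Gamma (t + 1) * exp (y + 1) := by
  have hint := GammaIntegral_convergent (by linarith : 0 < t + 1)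
  rw [add_sub_cancel_right] at hint
  have hsub : Ioc y (y + 1) ⊆ Ioi 0 := fun x hx => hy.trans_lt hx.1
  -- on `(y, y + 1]` the Gamma integrand is at least `exp (-(y + 1)) * y ^ t`
  have hlocal : exp (-(y + 1)) * y ^ t ≤ Gamma (t + 1) := by
    rw [Gamma_eq_integral (by linarith), add_sub_cancel_right]
    calc exp (-(y + 1)) * y ^ t
        = exp (-(y + 1)) * y ^ t * volume.real (Ioc y (y + 1)) := by simp
      _ ≤ ∫ x in Ioc y (y + 1), exp (-x) * x ^ t :=
          setIntegral_ge_of_const_le_real measurableSet_Ioc (by simp)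
            (fun x hx => by gcongr; exacts [hx.2, hx.1.le]) (hint.mono_set hsub)
      _ ≤ ∫ x in Ioi 0, exp (-x) * x ^ t :=
          setIntegral_mono_set hint
            ((ae_restrict_iff' measurableSet_Ioi).2
              (.of_forall fun x (hx : 0 < x) => by positivity))
            (.of_forall hsub)
  calc y ^ t = exp (-(y + 1)) * y ^ t * exp (y + 1) := by
        rw [mul_right_comm, ← exp_add, neg_add_cancel, exp_zero, one_mul]
    _ ≤ Gamma (t + 1) * exp (y + 1) := by gcongr

end Real

lemma summable_add_rpow_mul_geometric {a μ ρ : ℝ} (ha : 0 ≤ a) (hρ0 : 0 < ρ) (hρ1 : ρ < 1) :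
    Summable fun n : ℕ => (a + n) ^ μ * ρ ^ n := by
  have hpos : ∀ᶠ n : ℕ in atTop, 0 < a + n :=
    (eventually_ge_atTop 1).mono fun n hn => by
      have : (1 : ℝ) ≤ n := by exact_mod_cast hn
      linarith
  have hratio : Tendsto (fun n : ℕ => (1 + (a + n)⁻¹) ^ μ * ρ) atTop (𝓝 ρ) := by
    have hinv :=
      (tendsto_atTop_add_const_left atTop a tendsto_natCast_atTop_atTop).inv_tendsto_atTop
    simpa using ((hinv.const_add 1).rpow_const (p := μ) (.inl (by norm_num))).mul_const ρ
  refine summable_of_ratio_test_tendsto_lt_one hρ1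
    (hpos.mono fun n hn => by positivity) (hratio.congr' ?_)
  filter_upwards [hpos] with n hn
  rw [norm_of_nonneg (by positivity), norm_of_nonneg (by positivity), Nat.cast_succ,
    show a + (n + 1) = (a + n) * (1 + (a + n)⁻¹) by field_simp; ring,
    mul_rpow hn.le (by positivity), pow_succ]
  field_simp

lemma besselI_summand_nonneg {v z : ℝ} (hv : -1 < v) (hz : 0 ≤ z) (j : ℕ) :
    0 ≤ (z / 2) ^ (v + 2 * (j : ℝ)) / ((j.factorial : ℝ) * Gamma (v + (j : ℝ) + 1)) := by
  have := Gamma_pos_of_pos (by linarith [j.cast_nonneg (α := ℝ)] : 0 < v + j + 1)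
  positivity

lemma besselI_nonneg {v z : ℝ} (hv : -1 < v) (hz : 0 ≤ z) : 0 ≤ besselI v z :=
  tsum_nonneg (besselI_summand_nonneg hv hz)

lemma rpow_div_factorial_mul_Gamma_le {v a θ x : ℝ} (hv : 0 ≤ v) (ha : 0 ≤ a) (hθ : 0 < θ)
    (hx : 0 ≤ x) (j : ℕ) :
    x ^ (v + a + 2 * (j : ℝ)) / ((j.factorial : ℝ) * Gamma (v + a + (j : ℝ) + 1)) ≤
      2 * exp 1 * θ ^ a * x ^ v * exp (x / θ + x) * θ ^ j := by
  have haj : 0 ≤ a + j := by positivity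
  have hsplit : x ^ (v + a + 2 * (j : ℝ)) = x ^ v * x ^ (a + j) * x ^ j := by
    rw [show v + a + 2 * (j : ℝ) = v + (a + j) + j by ring,
      rpow_add_of_nonneg hx (by positivity) (by positivity), rpow_add_of_nonneg hx hv haj,
      rpow_natCast]
  have hΓ : Gamma (a + j + 1) ≤ 2 * Gamma (v + a + j + 1) := by
    rw [show v + a + j + 1 = a + j + 1 + v by ring]
    exact Gamma_le_two_mul_Gamma_add (by linarith) hv
  have hpow : x ^ (a + j) ≤ θ ^ a * θ ^ j * Gamma (a + j + 1) * exp (x / θ + 1) := by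
    have h := rpow_le_Gamma_mul_exp (div_nonneg hx hθ.le) haj
    rwa [div_rpow hx hθ.le, div_le_iff₀ (by positivity), rpow_add hθ, rpow_natCast,
      mul_comm, ← mul_assoc] at h
  have hfac : x ^ j ≤ j.factorial * exp x := by
    have h := pow_div_factorial_le_exp x hx j
    rwa [div_le_iff₀ (by positivity), mul_comm] at h
  have hΓpos := Gamma_pos_of_pos (by positivity : 0 < v + a + j + 1)
  rw [hsplit, div_le_iff₀ (by positivity)]
  calc x ^ v * x ^ (a + j) * x ^ j
      ≤ x ^ v * (θ ^ a * θ ^ j * (2 * Gamma (v + a + j + 1)) * exp (x / θ + 1)) *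
          (j.factorial * exp x) := by gcongr; exact hpow.trans (by gcongr)
    _ = 2 * exp 1 * θ ^ a * x ^ v * exp (x / θ + x) * θ ^ j *
          (j.factorial * Gamma (v + a + j + 1)) := by
        rw [exp_add, exp_add]; ring

lemma besselI_add_le {v a θ z : ℝ} (hv : 0 ≤ v) (ha : 0 ≤ a) (hθ0 : 0 < θ) (hθ1 : θ < 1)
    (hz : 0 ≤ z) :
    besselI (v + a) z ≤ 2 * exp 1 / (1 - θ) * θ ^ a * (z / 2) ^ v * exp (z / 2 / θ + z / 2) := by
  have hterm := rpow_div_factorial_mul_Gamma_le hv ha hθ0 (by positivity : 0 ≤ z / 2)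
  have hgeom := (summable_geometric_of_lt_one hθ0.le hθ1).mul_left
    (2 * exp 1 * θ ^ a * (z / 2) ^ v * exp (z / 2 / θ + z / 2))
  calc besselI (v + a) z
      ≤ ∑' j : ℕ, 2 * exp 1 * θ ^ a * (z / 2) ^ v * exp (z / 2 / θ + z / 2) * θ ^ j :=
        Summable.tsum_le_tsum hterm
          (.of_nonneg_of_le (besselI_summand_nonneg (by linarith) hz) hterm hgeom) hgeom
    _ = 2 * exp 1 / (1 - θ) * θ ^ a * (z / 2) ^ v * exp (z / 2 / θ + z / 2) := by
        rw [tsum_mul_left, tsum_geometric_of_lt_one hθ0.le hθ1]; ring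

lemma tsum_add_rpow_mul_besselI_le {a b v θ μ z : ℝ} (ha : 0 ≤ a) (hb : 0 < b) (hv : 0 ≤ v)
    (hθ0 : 0 < θ) (hθ1 : θ < 1) (hz : 0 ≤ z) :
    ∑' j : ℕ, (a + j) ^ μ * besselI (v + b * j) z ≤
      2 * exp 1 / (1 - θ) * (∑' j : ℕ, (a + j) ^ μ * (θ ^ b) ^ j) * (z / 2) ^ v *
        exp (z / 2 / θ + z / 2) := by
  set B := 2 * exp 1 / (1 - θ) * (z / 2) ^ v * exp (z / 2 / θ + z / 2)
  have hS := (summable_add_rpow_mul_geometric (μ := μ) ha (rpow_pos_of_pos hθ0 b)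
    (rpow_lt_one hθ0.le hθ1 hb)).mul_left B
  have hterm (j : ℕ) : (a + j) ^ μ * besselI (v + b * j) z ≤ B * ((a + j) ^ μ * (θ ^ b) ^ j) := by
    have h := besselI_add_le hv (by positivity : 0 ≤ b * j) hθ0 hθ1 hz
    rw [rpow_mul hθ0.le, rpow_natCast] at h
    calc _ ≤ (a + j) ^ μ * (2 * exp 1 / (1 - θ) * (θ ^ b) ^ j * (z / 2) ^ v *
          exp (z / 2 / θ + z / 2)) := by gcongr
      _ = _ := by ring
  have hnonneg (j : ℕ) : 0 ≤ (a + j) ^ μ * besselI (v + b * j) z :=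
    mul_nonneg (by positivity) (besselI_nonneg (by linarith [mul_nonneg hb.le j.cast_nonneg]) hz)
  calc _ ≤ ∑' j : ℕ, B * ((a + j) ^ μ * (θ ^ b) ^ j) :=
        Summable.tsum_le_tsum hterm (.of_nonneg_of_le hnonneg hterm hS) hS
    _ = _ := by rw [tsum_mul_left]; ring

theorem bessel_weighted_sum_bound_general (β : ℝ) (hβ0 : 0 < β)
    (ε : ℝ) (hε : 0 < ε) (N : ℕ) (μ₁ μ₂ : ℝ)
    (hNβ : 0 ≤ (N : ℝ) / β - μ₁) :
    ∃ C > 0, ∀ z : ℝ, 0 ≤ z →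
      (∑' j : ℕ, ((N : ℝ) + (j : ℝ)) ^ μ₂ * besselI (((N : ℝ) + (j : ℝ)) / β - μ₁) z) ≤
        C * z ^ ((N : ℝ) / β - μ₁) * Real.exp (3 * z / 2) * Real.exp (ε * z) := by
  set θ : ℝ := (2 + 2 * ε)⁻¹
  have hθ0 : 0 < θ := by positivity
  have hθ1 : θ < 1 := inv_lt_one_of_one_lt₀ (by linarith)
  set K := 2 * exp 1 / (1 - θ) * ∑' j : ℕ, ((N : ℝ) + j) ^ μ₂ * (θ ^ β⁻¹) ^ j
  have hK : 0 ≤ K :=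
    mul_nonneg (div_nonneg (by positivity) (by linarith)) (tsum_nonneg fun j => by positivity)
  refine ⟨K + 1, by positivity, fun z hz => ?_⟩
  have hexp : exp (z / 2 / θ + z / 2) = exp (3 * z / 2) * exp (ε * z) := by
    rw [← exp_add]; congr 1; simp only [θ, div_inv_eq_mul]; ring
  have horder (j : ℕ) : ((N : ℝ) + j) / β - μ₁ = (N / β - μ₁) + β⁻¹ * j := by ring
  calc _ = ∑' j : ℕ, ((N : ℝ) + j) ^ μ₂ * besselI ((N / β - μ₁) + β⁻¹ * j) z := by
        simp only [horder]
    _ ≤ K * (z / 2) ^ ((N : ℝ) / β - μ₁) * exp (z / 2 / θ + z / 2) :=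
        tsum_add_rpow_mul_besselI_le N.cast_nonneg (inv_pos.2 hβ0) hNβ hθ0 hθ1 hz
    _ ≤ (K + 1) * z ^ ((N : ℝ) / β - μ₁) * exp (3 * z / 2) * exp (ε * z) := by
        rw [hexp, ← mul_assoc]
        gcongr
        · linarith
        · linarith

/-- For any `ε > 0`, integer `N ≥ 1`, and `μ₁, μ₂ ≥ 0` with `N/β − μ₁ ≥ 0`, there is a
constant `C = C(β,ε,N,μ₁,μ₂)` with
`Σ_{k=N}^∞ k^{μ₂} I_{k/β−μ₁}(z) ≤ C z^{N/β−μ₁} e^{3z/2} e^{εz}` for all `z ≥ 0`. -/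
theorem bessel_weighted_sum_bound (β : ℝ) (hβ0 : 0 < β) (hβ1 : β < 1)
    (ε : ℝ) (hε : 0 < ε) (N : ℕ) (hN : 1 ≤ N) (μ₁ μ₂ : ℝ) (hμ₁ : 0 ≤ μ₁) (hμ₂ : 0 ≤ μ₂)
    (hNβ : 0 ≤ (N : ℝ) / β - μ₁) :
    ∃ C > 0, ∀ z : ℝ, 0 ≤ z →
      (∑' j : ℕ, ((N : ℝ) + (j : ℝ)) ^ μ₂ * besselI (((N : ℝ) + (j : ℝ)) / β - μ₁) z) ≤
        C * z ^ ((N : ℝ) / β - μ₁) * Real.exp (3 * z / 2) * Real.exp (ε * z) :=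
  bessel_weighted_sum_bound_general β hβ0 ε hε N μ₁ μ₂ hNβ
end

section
/- Let v ≥ 1 and 0 ≤ z₁ ≤ z₂. Then |I'_v(z₂) − I'_v(z₁)| ≤ (v/(2^v Γ(v+1)))·(z₂^{v−1} − z₁^{v−1}) + (z₂−z₁)·(1 + v/2)·I_v(z₂). In particular, if moreover v < 2, then |I'_v(z₂) − I'_v(z₁)| ≤ (v/(2^v Γ(v+1)))·(z₂−z₁)^{v−1} + (z₂−z₁)·(1 + v/2)·I_v(z₂). -/
/-!
Differentiate the series termwise. The `j = 0` term of `I'_v` is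
`v / (2^v Γ(v+1)) · z^(v-1)` and gives the first summand. Every other term of `I'_v` is a constant
times `(z/2)^p` with `p ≥ 1`, so by convexity of `t ↦ t^p` its increment on `[z₁, z₂]` is at most
`(z₂ - z₁)` times its derivative at `z₂`, which is at most `(1 + v/2)` times the previous term of
`I_v(z₂)`. For `v < 2` the exponent `v - 1` lies in `[0, 1]`, where `t ↦ t^(v-1)` is subadditive.
-/

open Real

lemma rpow_sub_rpow_le_mul_sub {a b p : ℝ} (hb : 0 ≤ b) (hba : b ≤ a) (hp : 1 ≤ p) :
    a ^ p - b ^ p ≤ p * a ^ (p - 1) * (a - b) := by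
  rcases hba.eq_or_lt with rfl | hlt
  · simp
  have h := (convexOn_rpow hp).slope_le_of_hasDerivAt (Set.mem_Ici.2 hb)
    (Set.mem_Ici.2 (hb.trans hba)) hlt (hasDerivAt_rpow_const (Or.inr hp))
  rwa [slope_def_field, div_le_iff₀ (sub_pos.2 hlt)] at h

lemma rpow_sub_rpow_le_rpow_sub {x y p : ℝ} (hy : 0 ≤ y) (hyx : y ≤ x) (hp₀ : 0 ≤ p)
    (hp₁ : p ≤ 1) : x ^ p - y ^ p ≤ (x - y) ^ p := by
  have h := rpow_add_le_add_rpow (sub_nonneg.2 hyx) hy hp₀ hp₁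
  rw [sub_add_cancel] at h
  linarith

lemma Gamma_le_Gamma_add_natCast {v : ℝ} (hv : 1 ≤ v) (j : ℕ) :
    Gamma (v + 1) ≤ Gamma (v + j + 1) :=
  Gamma_strictMonoOn_Ici.monotoneOn (by simp; linarith) (by simp; linarith [j.cast_nonneg (α := ℝ)])
    (by linarith [j.cast_nonneg (α := ℝ)])

lemma factorial_mul_Gamma_pos {v : ℝ} (hv : -1 < v) (j : ℕ) :
    0 < (j.factorial : ℝ) * Gamma (v + j + 1) :=
  mul_pos (Nat.cast_pos.2 j.factorial_pos) (Gamma_pos_of_pos (by linarith [j.cast_nonneg (α := ℝ)]))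

lemma factorial_mul_Gamma_succ {v : ℝ} (hv : 0 ≤ v) (k : ℕ) :
    ((k + 1).factorial : ℝ) * Gamma (v + ((k + 1 : ℕ) : ℝ) + 1) =
      (k + 1) * (v + k + 1) * ((k.factorial : ℝ) * Gamma (v + k + 1)) := by
  rw [Nat.factorial_succ, Nat.cast_mul, Nat.cast_succ,
    show v + ((k : ℝ) + 1) + 1 = v + k + 1 + 1 by ring, Gamma_add_one (by positivity)]
  ring

noncomputable def besselITerm (v z : ℝ) (j : ℕ) : ℝ :=
  (z / 2) ^ (v + 2 * (j : ℝ)) / ((j.factorial : ℝ) * Gamma (v + (j : ℝ) + 1))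

noncomputable def besselIDerivTerm (v z : ℝ) (j : ℕ) : ℝ :=
  (v + 2 * (j : ℝ)) / 2 * (z / 2) ^ (v + 2 * (j : ℝ) - 1) /
    ((j.factorial : ℝ) * Gamma (v + (j : ℝ) + 1))

lemma besselI_eq_tsum (v z : ℝ) : besselI v z = ∑' j, besselITerm v z j := rfl

section

variable {v : ℝ}

lemma hasDerivAt_besselITerm (hv : 1 ≤ v) (z : ℝ) (j : ℕ) :
    HasDerivAt (fun z => besselITerm v z j) (besselIDerivTerm v z j) z := by
  have hp : 1 ≤ v + 2 * (j : ℝ) := by linarith [j.cast_nonneg (α := ℝ)]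
  refine ((((hasDerivAt_id' z).div_const 2).rpow_const (Or.inr hp)).div_const
    ((j.factorial : ℝ) * Gamma (v + j + 1))).congr_deriv ?_
  rw [besselIDerivTerm]
  ring

lemma besselITerm_nonneg (hv : -1 < v) {z : ℝ} (hz : 0 ≤ z) (j : ℕ) : 0 ≤ besselITerm v z j :=
  div_nonneg (rpow_nonneg (by positivity) _) (factorial_mul_Gamma_pos hv j).le

lemma besselITerm_le_pow_div_factorial (hv : 1 ≤ v) {z : ℝ} (hz : 0 ≤ z) (j : ℕ) :
    besselITerm v z j ≤ (z / 2) ^ v / Gamma (v + 1) * (((z / 2) ^ 2) ^ j / j.factorial) := by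
  have hpow : (z / 2) ^ (v + 2 * (j : ℝ)) = (z / 2) ^ v * ((z / 2) ^ 2) ^ j := by
    rw [rpow_add' (by positivity) (by positivity), ← pow_mul, ← rpow_natCast]
    norm_cast
  have hG : 0 < Gamma (v + 1) := Gamma_pos_of_pos (by linarith)
  calc besselITerm v z j
      ≤ (z / 2) ^ v * ((z / 2) ^ 2) ^ j / (j.factorial * Gamma (v + 1)) := by
        rw [besselITerm, hpow]
        gcongr
        exact Gamma_le_Gamma_add_natCast hv j
    _ = _ := by ring

lemma summable_besselITerm (hv : 1 ≤ v) {z : ℝ} (hz : 0 ≤ z) : Summable (besselITerm v z) :=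
  .of_nonneg_of_le (besselITerm_nonneg (by linarith) hz) (besselITerm_le_pow_div_factorial hv hz)
    ((summable_pow_div_factorial _).mul_left _)

lemma besselIDerivTerm_nonneg (hv : 0 ≤ v) {z : ℝ} (hz : 0 ≤ z) (j : ℕ) :
    0 ≤ besselIDerivTerm v z j :=
  div_nonneg (mul_nonneg (by positivity) (rpow_nonneg (by positivity) _))
    (factorial_mul_Gamma_pos (by linarith) j).le

lemma besselIDerivTerm_zero {z : ℝ} (hz : 0 ≤ z) :
    besselIDerivTerm v z 0 = v / (2 ^ v * Gamma (v + 1)) * z ^ (v - 1) := by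
  simp only [besselIDerivTerm, Nat.cast_zero, Nat.factorial_zero, Nat.cast_one, mul_zero, add_zero,
    one_mul]
  rw [div_rpow hz zero_le_two, rpow_sub_one two_ne_zero]
  ring

lemma besselIDerivTerm_mono (hv : 1 ≤ v) {z₁ z₂ : ℝ} (hz₁ : 0 ≤ z₁) (h12 : z₁ ≤ z₂) (j : ℕ) :
    besselIDerivTerm v z₁ j ≤ besselIDerivTerm v z₂ j := by
  have hc := factorial_mul_Gamma_pos (v := v) (by linarith) j
  have hs : 0 ≤ v + 2 * (j : ℝ) - 1 := by linarith [j.cast_nonneg (α := ℝ)]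
  unfold besselIDerivTerm
  gcongr

lemma abs_besselIDerivTerm_le (hv : 1 ≤ v) {y R : ℝ} (hy : |y| ≤ R) (j : ℕ) :
    |besselIDerivTerm v y j| ≤ besselIDerivTerm v R j := by
  have hc := factorial_mul_Gamma_pos (v := v) (by linarith) j
  have hs : 0 ≤ v + 2 * (j : ℝ) := by positivity
  calc |besselIDerivTerm v y j|
      = (v + 2 * (j : ℝ)) / 2 * |(y / 2) ^ (v + 2 * (j : ℝ) - 1)| /
          ((j.factorial : ℝ) * Gamma (v + (j : ℝ) + 1)) := by
        rw [besselIDerivTerm, abs_div, abs_mul, abs_of_nonneg (by positivity), abs_of_pos hc]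
    _ ≤ besselIDerivTerm v |y| j := by
        rw [besselIDerivTerm, ← abs_two, ← abs_div, abs_two]
        gcongr
        exact abs_rpow_le_abs_rpow _ _
    _ ≤ besselIDerivTerm v R j := besselIDerivTerm_mono hv (abs_nonneg y) hy j

lemma besselIDerivTerm_succ_sub_le (hv : 0 ≤ v) {z₁ z₂ : ℝ} (hz₁ : 0 ≤ z₁) (h12 : z₁ ≤ z₂)
    (k : ℕ) : besselIDerivTerm v z₂ (k + 1) - besselIDerivTerm v z₁ (k + 1) ≤
      (z₂ - z₁) * (1 + v / 2) * besselITerm v z₂ k := by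
  obtain ⟨p, hp⟩ : ∃ p, p = v + 2 * (k : ℝ) + 1 := ⟨_, rfl⟩
  obtain ⟨c, hc⟩ : ∃ c, c = (k.factorial : ℝ) * Gamma (v + k + 1) := ⟨_, rfl⟩
  have hc_pos : 0 < c := hc ▸ factorial_mul_Gamma_pos (by linarith) k
  have hk : (0 : ℝ) ≤ k := k.cast_nonneg
  have hD : ∀ z, besselIDerivTerm v z (k + 1) =
      (v + 2 * k + 2) / 2 / ((k + 1) * (v + k + 1) * c) * (z / 2) ^ p := by
    intro z
    rw [besselIDerivTerm, show v + 2 * ((k + 1 : ℕ) : ℝ) - 1 = p by push_cast; linarith,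
      factorial_mul_Gamma_succ hv, ← hc]
    push_cast
    ring
  have hT : besselITerm v z₂ k = (z₂ / 2) ^ (p - 1) / c := by
    rw [besselITerm, hc, hp, add_sub_cancel_right]
  have hratio : (v + 2 * k + 2) * p / (4 * ((k + 1) * (v + k + 1))) ≤ 1 + v / 2 := by
    rw [div_le_iff₀ (by positivity), hp]
    nlinarith [mul_nonneg hv hk, mul_nonneg hk hk, mul_nonneg hv hv]
  calc besselIDerivTerm v z₂ (k + 1) - besselIDerivTerm v z₁ (k + 1)
      = (v + 2 * k + 2) / 2 / ((k + 1) * (v + k + 1) * c) * ((z₂ / 2) ^ p - (z₁ / 2) ^ p) := by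
        rw [hD, hD]; ring
    _ ≤ (v + 2 * k + 2) / 2 / ((k + 1) * (v + k + 1) * c) *
          (p * (z₂ / 2) ^ (p - 1) * (z₂ / 2 - z₁ / 2)) := by
        gcongr
        exact rpow_sub_rpow_le_mul_sub (by positivity) (by linarith) (by linarith)
    _ = (z₂ - z₁) * ((v + 2 * k + 2) * p / (4 * ((k + 1) * (v + k + 1)))) *
          besselITerm v z₂ k := by
        rw [hT]
        field_simp
        ring
    _ ≤ (z₂ - z₁) * (1 + v / 2) * besselITerm v z₂ k :=
        mul_le_mul_of_nonneg_right (mul_le_mul_of_nonneg_left hratio (by linarith))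
          (besselITerm_nonneg (by linarith) (hz₁.trans h12) k)

lemma summable_besselIDerivTerm (hv : 1 ≤ v) {z : ℝ} (hz : 0 ≤ z) :
    Summable (besselIDerivTerm v z) := by
  refine (summable_nat_add_iff 1).1 <| .of_nonneg_of_le
    (fun k => besselIDerivTerm_nonneg (by linarith) hz (k + 1)) (fun k => ?_)
    ((summable_besselITerm hv hz).mul_left (z * (1 + v / 2)))
  have h0 : besselIDerivTerm v 0 (k + 1) = 0 := by
    rw [besselIDerivTerm, zero_div, zero_rpow (by push_cast; linarith [k.cast_nonneg (α := ℝ)])]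
    simp
  simpa [h0, mul_assoc] using besselIDerivTerm_succ_sub_le (v := v) (by linarith) le_rfl hz k

lemma hasDerivAt_besselI (hv : 1 ≤ v) (z : ℝ) :
    HasDerivAt (besselI v) (∑' j, besselIDerivTerm v z j) z :=
  hasDerivAt_tsum_of_isPreconnected (g := fun j z => besselITerm v z j)
    (t := Set.Ioo (-(|z| + 1)) (|z| + 1))
    (summable_besselIDerivTerm hv (by positivity : 0 ≤ |z| + 1)) isOpen_Ioo
    (convex_Ioo _ _).isPreconnected (fun j y _ => hasDerivAt_besselITerm hv y j)
    (fun j y hy => abs_besselIDerivTerm_le hv (abs_le.2 ⟨by linarith [hy.1], hy.2.le⟩) j)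
    (y₀ := 0) ⟨by linarith [abs_nonneg z], by positivity⟩ (summable_besselITerm hv le_rfl)
    ⟨by linarith [neg_abs_le z], by linarith [le_abs_self z]⟩

lemma abs_deriv_besselI_sub_le (hv : 1 ≤ v) {z₁ z₂ : ℝ} (hz₁ : 0 ≤ z₁) (h12 : z₁ ≤ z₂) :
    |deriv (besselI v) z₂ - deriv (besselI v) z₁| ≤
      v / (2 ^ v * Gamma (v + 1)) * (z₂ ^ (v - 1) - z₁ ^ (v - 1)) +
        (z₂ - z₁) * (1 + v / 2) * besselI v z₂ := by
  have hz₂ := hz₁.trans h12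
  have hS := (summable_besselIDerivTerm hv hz₂).sub (summable_besselIDerivTerm hv hz₁)
  rw [(hasDerivAt_besselI hv z₂).deriv, (hasDerivAt_besselI hv z₁).deriv,
    ← (summable_besselIDerivTerm hv hz₂).tsum_sub (summable_besselIDerivTerm hv hz₁),
    abs_of_nonneg (tsum_nonneg fun j => sub_nonneg.2 (besselIDerivTerm_mono hv hz₁ h12 j)),
    hS.tsum_eq_zero_add, besselIDerivTerm_zero hz₂, besselIDerivTerm_zero hz₁, ← mul_sub,
    besselI_eq_tsum, ← tsum_mul_left]
  exact add_le_add le_rfl <| Summable.tsum_le_tsum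
    (besselIDerivTerm_succ_sub_le (by linarith) hz₁ h12)
    (hS.comp_injective (add_left_injective 1)) ((summable_besselITerm hv hz₂).mul_left _)

end

/-- For `v ≥ 1` and `0 ≤ z₁ ≤ z₂`:
`|I'_v(z₂) − I'_v(z₁)| ≤ (v/(2^v Γ(v+1)))(z₂^{v−1} − z₁^{v−1}) + (z₂−z₁)(1+v/2) I_v(z₂)`;
if moreover `v < 2` then
`|I'_v(z₂) − I'_v(z₁)| ≤ (v/(2^v Γ(v+1)))(z₂−z₁)^{v−1} + (z₂−z₁)(1+v/2) I_v(z₂)`. -/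
theorem besselI_deriv_holder (v z₁ z₂ : ℝ) (hv : 1 ≤ v) (hz₁ : 0 ≤ z₁) (h12 : z₁ ≤ z₂) :
    |deriv (fun z => besselI v z) z₂ - deriv (fun z => besselI v z) z₁| ≤
        v / ((2 : ℝ) ^ v * Real.Gamma (v + 1)) * (z₂ ^ (v - 1) - z₁ ^ (v - 1)) +
          (z₂ - z₁) * (1 + v / 2) * besselI v z₂ ∧
      (v < 2 →
        |deriv (fun z => besselI v z) z₂ - deriv (fun z => besselI v z) z₁| ≤
          v / ((2 : ℝ) ^ v * Real.Gamma (v + 1)) * (z₂ - z₁) ^ (v - 1) +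
            (z₂ - z₁) * (1 + v / 2) * besselI v z₂) := by
  have hmain := abs_deriv_besselI_sub_le hv hz₁ h12
  refine ⟨hmain, fun hv2 => hmain.trans ?_⟩
  have hcoef : 0 ≤ v / ((2 : ℝ) ^ v * Gamma (v + 1)) :=
    div_nonneg (by linarith) (mul_pos (by positivity) (Gamma_pos_of_pos (by linarith))).le
  gcongr
  exact rpow_sub_rpow_le_rpow_sub hz₁ h12 (by linarith) (by linarith)
end
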